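/- Let r ≥ 0 and let M and M' be r-minimal finite quasimetric spaces. If φ : M → M' is an r-homotopy equivalence, then φ is an isometry (a distance-preserving bijection). -/

import Mathlib

open scoped ENNReal

class QuasiMetric (X : Type*) where
  qdist : X → X → ℝ≥0∞
  qdist_triangle : ∀ x y z : X, qdist x z ≤ qdist x y + qdist y z
  qdist_eq_zero_iff : ∀ x y : X, qdist x y = 0 ↔ x = y

open QuasiMetric

instance {X : Type*} [QuasiMetric X] (A : Set X) : QuasiMetric A where
  qdist a b := qdist a.1 b.1
  qdist_triangle a b c := qdist_triangle a.1 b.1 c.1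
  qdist_eq_zero_iff a b := (qdist_eq_zero_iff a.1 b.1).trans Subtype.coe_inj

/-- A map of quasimetric spaces is short (1-Lipschitz). -/
def IsShort {X Y : Type*} [QuasiMetric X] [QuasiMetric Y] (f : X → Y) : Prop :=
  ∀ x x' : X, qdist (f x) (f x') ≤ qdist x x'

/-- The distance `d(f,g) = sup_x d(f x, g x)` on maps. -/
noncomputable def mapDist {X Y : Type*} [QuasiMetric X] [QuasiMetric Y] (f g : X → Y) : ℝ≥0∞ :=
  ⨆ x : X, qdist (f x) (g x)

/-- Two short maps are `r`-homotopic if they are connected by a chain of short maps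
in which each consecutive pair is at distance `≤ r` in one direction or the other. -/
def MapHomotopic {X Y : Type*} [QuasiMetric X] [QuasiMetric Y] (r : ℝ) (f g : X → Y) : Prop :=
  Relation.ReflTransGen
    (fun u v : X → Y => IsShort u ∧ IsShort v ∧
      (mapDist u v ≤ ENNReal.ofReal r ∨ mapDist v u ≤ ENNReal.ofReal r)) f g

/-- `A ⊆ X` is an `r`-deformation retract of `X`. -/
def IsDefRetract {X : Type*} [QuasiMetric X] (r : ℝ) (A : Set X) : Prop :=
  ∃ ρ : X → A, IsShort ρ ∧ (∀ a : A, ρ (a : X) = a) ∧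
    MapHomotopic r (fun x => (ρ x : X)) id

/-- A quasimetric space is `r`-minimal if it has no proper `r`-deformation retract. -/
def RMinimal (r : ℝ) (X : Type*) [QuasiMetric X] : Prop :=
  ∀ A : Set X, IsDefRetract r A → A = Set.univ

/-- A distance-preserving bijection. -/
def IsIsometry {X Y : Type*} [QuasiMetric X] [QuasiMetric Y] (f : X → Y) : Prop :=
  Function.Bijective f ∧ ∀ x x' : X, qdist (f x) (f x') = qdist x x'

/-- Two quasimetric spaces are `r`-homotopy equivalent. -/
def RHomotopyEquivalent (r : ℝ) (X Y : Type*) [QuasiMetric X] [QuasiMetric Y] : Prop :=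
  ∃ f : X → Y, ∃ g : Y → X, IsShort f ∧ IsShort g ∧
    MapHomotopic r (g ∘ f) id ∧ MapHomotopic r (f ∘ g) id

/-!
If `h` is a short self-map of a finite space that is `r`-homotopic to the identity, some
iterate `e = h^[m]` (`m > 0`) is idempotent, so `e` retracts the space onto its range; that
retraction is short and `r`-homotopic to the identity, hence an `r`-deformation retraction. By
`r`-minimality the range is everything, so `e = id`: `h` is a bijection, and a short map with a
short inverse `h^[m-1]` is an isometry. Applied to `ψ ∘ φ` and `φ ∘ ψ` this makes `φ` injective,
surjective, and distance preserving.
-/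

lemma Finite.exists_iterate_idempotent {α : Type*} [Finite α] (f : α → α) :
    ∃ m, 0 < m ∧ f^[m] ∘ f^[m] = f^[m] := by
  obtain ⟨i, j, hne, hij⟩ := Finite.exists_ne_map_eq_of_infinite (fun n : ℕ => f^[n])
  wlog hlt : i < j generalizing i j
  · exact this j i hne.symm hij.symm (by omega)
  set p := j - i
  have hp : 0 < p := by omega
  have periodic : ∀ n, i ≤ n → f^[n + p] = f^[n] := by
    intro n hn
    calc f^[n + p] = f^[n - i] ∘ f^[j] := by rw [← Function.iterate_add]; congr 1; omega
      _ = f^[n - i] ∘ f^[i] := by rw [← hij]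
      _ = f^[n] := by rw [← Function.iterate_add]; congr 1; omega
  have periodic_mul : ∀ k n, i ≤ n → f^[n + k * p] = f^[n] := by
    intro k
    induction k with
    | zero => simp
    | succ k ih =>
      intro n hn
      rw [show n + (k + 1) * p = n + k * p + p by ring, periodic _ (by omega), ih n hn]
  refine ⟨(i + 1) * p, by positivity, ?_⟩
  rw [← Function.iterate_add]
  exact periodic_mul (i + 1) _ (by nlinarith)

section

variable {X Y Z : Type*} [QuasiMetric X] [QuasiMetric Y] [QuasiMetric Z]

lemma IsShort.comp {g : Y → Z} {f : X → Y} (hg : IsShort g) (hf : IsShort f) :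
    IsShort (g ∘ f) := fun x x' => (hg _ _).trans (hf x x')

lemma isShort_id : IsShort (id : X → X) := fun _ _ => le_rfl

lemma IsShort.iterate {f : X → X} (hf : IsShort f) (n : ℕ) : IsShort f^[n] := by
  induction n with
  | zero => exact isShort_id
  | succ n ih => rw [Function.iterate_succ]; exact ih.comp hf

lemma mapDist_comp_left_le {w : Y → Z} (hw : IsShort w) (u v : X → Y) :
    mapDist (w ∘ u) (w ∘ v) ≤ mapDist u v :=
  iSup_le fun x => (hw _ _).trans (le_iSup (fun x => qdist (u x) (v x)) x)

lemma MapHomotopic.comp_left {r : ℝ} {f g : X → Y} {w : Y → Z} (hw : IsShort w)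
    (h : MapHomotopic r f g) : MapHomotopic r (w ∘ f) (w ∘ g) := by
  refine Relation.ReflTransGen.lift (w ∘ ·) ?_ _ _ h
  rintro u v ⟨hu, hv, hd⟩
  exact ⟨hw.comp hu, hw.comp hv,
    hd.imp (le_trans (mapDist_comp_left_le hw u v)) (le_trans (mapDist_comp_left_le hw v u))⟩

lemma MapHomotopic.iterate {r : ℝ} {h : X → X} (hsh : IsShort h)
    (hh : MapHomotopic r h id) (n : ℕ) : MapHomotopic r h^[n] id := by
  induction n with
  | zero => exact Relation.ReflTransGen.refl
  | succ n ih =>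
    rw [Function.iterate_succ]
    exact (hh.comp_left (hsh.iterate n)).trans ih

lemma isDefRetract_range_of_idempotent {r : ℝ} {e : X → X} (he : IsShort e)
    (hidem : e ∘ e = e) (hhom : MapHomotopic r e id) : IsDefRetract r (Set.range e) := by
  refine ⟨fun x => ⟨e x, x, rfl⟩, fun x x' => he x x', ?_, hhom⟩
  rintro ⟨_, y, rfl⟩
  exact Subtype.ext (congrFun hidem y)

lemma RMinimal.eq_id_of_idempotent {r : ℝ} (hmin : RMinimal r X) {e : X → X} (he : IsShort e)
    (hidem : e ∘ e = e) (hhom : MapHomotopic r e id) : e = id := by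
  have hrange := hmin _ (isDefRetract_range_of_idempotent he hidem hhom)
  funext x
  obtain ⟨y, rfl⟩ : x ∈ Set.range e := hrange ▸ Set.mem_univ x
  exact congrFun hidem y

lemma IsShort.isIsometry_of_iterate_eq_id {f : X → X} (hf : IsShort f) {n : ℕ}
    (hn : f^[n + 1] = id) : IsIsometry f := by
  have hleft : Function.LeftInverse f^[n] f := fun x => by
    rw [← Function.iterate_succ_apply, hn, id]
  have hright : Function.RightInverse f^[n] f := fun x => by
    rw [← Function.iterate_succ_apply' f n, hn, id]
  refine ⟨⟨hleft.injective, hright.surjective⟩, fun x x' => le_antisymm (hf x x') ?_⟩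
  calc qdist x x' = qdist (f^[n] (f x)) (f^[n] (f x')) := by rw [hleft x, hleft x']
    _ ≤ qdist (f x) (f x') := hf.iterate n _ _

lemma RMinimal.isIsometry_of_mapHomotopic_id [Finite X] {r : ℝ} (hmin : RMinimal r X)
    {h : X → X} (hsh : IsShort h) (hhom : MapHomotopic r h id) : IsIsometry h := by
  obtain ⟨m, hm, hidem⟩ := Finite.exists_iterate_idempotent h
  obtain ⟨n, rfl⟩ : ∃ n, m = n + 1 := ⟨m - 1, by omega⟩
  exact hsh.isIsometry_of_iterate_eq_id
    (hmin.eq_id_of_idempotent (hsh.iterate _) hidem (hhom.iterate hsh _))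

lemma IsShort.isIsometry_of_comp {f : X → Y} {g : Y → X} (hf : IsShort f) (hg : IsShort g)
    (hgf : IsIsometry (g ∘ f)) (hfg : Function.Surjective (f ∘ g)) : IsIsometry f := by
  refine ⟨⟨hgf.1.1.of_comp, hfg.of_comp⟩, fun x x' => le_antisymm (hf x x') ?_⟩
  calc qdist x x' = qdist (g (f x)) (g (f x')) := (hgf.2 x x').symm
    _ ≤ qdist (f x) (f x') := hg _ _

end

theorem stmt_3_general {M M' : Type*} [QuasiMetric M] [QuasiMetric M'] [Finite M] [Finite M']
    (r : ℝ) (hM : RMinimal r M) (hM' : RMinimal r M')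
    (φ : M → M') (hφ : IsShort φ)
    (hequiv : ∃ ψ : M' → M, IsShort ψ ∧ MapHomotopic r (ψ ∘ φ) id ∧ MapHomotopic r (φ ∘ ψ) id) :
    IsIsometry φ := by
  obtain ⟨ψ, hψ, hψφ, hφψ⟩ := hequiv
  exact hφ.isIsometry_of_comp hψ (hM.isIsometry_of_mapHomotopic_id (hψ.comp hφ) hψφ)
    (hM'.isIsometry_of_mapHomotopic_id (hφ.comp hψ) hφψ).1.2

theorem stmt_3 {M M' : Type*} [QuasiMetric M] [QuasiMetric M'] [Finite M] [Finite M']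
    (r : ℝ) (hr : 0 ≤ r) (hM : RMinimal r M) (hM' : RMinimal r M')
    (φ : M → M') (hφ : IsShort φ)
    (hequiv : ∃ ψ : M' → M, IsShort ψ ∧ MapHomotopic r (ψ ∘ φ) id ∧ MapHomotopic r (φ ∘ ψ) id) :
    IsIsometry φ :=
  stmt_3_general r hM hM' φ hφ hequiv
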